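/- Let W ∈ 𝒱_n and 1 ≤ i ≤ n, and suppose that W ∩ V_i is not s_i-invariant. Then the restriction homomorphism O(V_i) → O(W ∩ V_i), restricted to the fixed subalgebra O(V_i)^{s_i}, is surjective; that is, every regular function on W ∩ V_i extends to an s_i-invariant regular function on V_i. -/

import Mathlib

/-! Basic setup: type A_n geometric representation, Weyl lines, combinatorics. -/

set_option linter.unusedSectionVars false
set_option synthInstance.maxHeartbeats 1000000
set_option maxHeartbeats 1000000

namespace TLpaper

/-- A permutation is a transposition. -/
def IsTransposition {α : Type} [DecidableEq α] (σ : Equiv.Perm α) : Prop :=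
  ∃ a b, a ≠ b ∧ σ = Equiv.swap a b

variable (k : Type) [Field k] [CharZero k] (n : ℕ)

/-- The reflecting hyperplane of a permutation `t` inside `V = {x | ∑ x i = 0}`:
the set of points of `V` fixed by permuting the coordinates by `t`.  For a
transposition `t = (a b)` this is `{x ∈ V | x a = x b}`. -/
def Hyp (t : Equiv.Perm (Fin (n + 1))) : Set (Fin (n + 1) → k) :=
  {x | (∑ i, x i) = 0 ∧ ∀ i, x (t i) = x i}

/-- A Weyl line: a one-dimensional linear subspace of `V` which is an
intersection of a (possibly empty) family of reflecting hyperplanes. -/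
def IsWeylLine (L : Set (Fin (n + 1) → k)) : Prop :=
  (∃ v : Fin (n + 1) → k, v ≠ 0 ∧ L = Set.range fun c : k => c • v) ∧
  ∃ T : Set (Equiv.Perm (Fin (n + 1))),
    (∀ t ∈ T, IsTransposition t) ∧
    L = {x | (∑ i, x i) = 0} ∩ ⋂ t ∈ T, Hyp k n t

/-- `Z`: the union of all Weyl lines. -/
def ZZ : Set (Fin (n + 1) → k) := ⋃ L ∈ {L | IsWeylLine k n L}, L

/-- `V_t`: the union of all Weyl lines transverse to `t` (i.e. not contained in `H_t`). -/
def Vt (t : Equiv.Perm (Fin (n + 1))) : Set (Fin (n + 1) → k) :=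
  ⋃ L ∈ {L | IsWeylLine k n L ∧ ¬L ⊆ Hyp k n t}, L

open Fin.NatCast in
/-- The simple transposition `s_i = (i, i+1)` (0-indexed: it swaps coordinates
`i` and `i+1` of `Fin (n+1)`, for `i < n`). -/
def simple (i : ℕ) : Equiv.Perm (Fin (n + 1)) :=
  Equiv.swap (i : Fin (n + 1)) ((i + 1 : ℕ) : Fin (n + 1))

/-- `V_i := V_{s_i}`. -/
def Vi (i : ℕ) : Set (Fin (n + 1) → k) := Vt k n (simple n i)

/-- The action of a permutation on a subset of `k^{n+1}` (permuting coordinates). -/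
def permSet (σ : Equiv.Perm (Fin (n + 1))) (W : Set (Fin (n + 1) → k)) :
    Set (Fin (n + 1) → k) :=
  (fun x => x ∘ σ) '' W

/-- `i · W := V_i ∩ (W ∪ s_i (W))`. -/
def dotAct (i : ℕ) (W : Set (Fin (n + 1) → k)) : Set (Fin (n + 1) → k) :=
  Vi k n i ∩ (W ∪ permSet k n (simple n i) W)

/-- The set `W_{i_1 ⋯ i_m}` associated with a sequence of indices. -/
def seqSet : List ℕ → Set (Fin (n + 1) → k)
  | [] => ZZ k n
  | [i] => Vi k n i
  | i :: j :: l => dotAct k n i (seqSet (j :: l))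

/-- Membership in the family `𝒱_n`. -/
def memVn (W : Set (Fin (n + 1) → k)) : Prop :=
  ∃ l : List ℕ, l ≠ [] ∧ (∀ i ∈ l, i < n) ∧ W = seqSet k n l

/-- A set of pairwise commuting transpositions. -/
def CommTranspositions (Q : Set (Equiv.Perm (Fin (n + 1)))) : Prop :=
  (∀ t ∈ Q, IsTransposition t) ∧ ∀ t ∈ Q, ∀ t' ∈ Q, t * t' = t' * t


/-! Coordinate rings of subvarieties of `k^{n+1}`. -/

noncomputable section

/-- The ring `O(X)` of regular functions on `X`: the quotient of the polynomial ring
`k[X_0, …, X_n]` by the vanishing ideal of `X`. -/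
def O (X : Set (Fin (n + 1) → k)) : Type :=
  MvPolynomial (Fin (n + 1)) k ⧸ MvPolynomial.vanishingIdeal k X

instance (X : Set (Fin (n + 1) → k)) : CommRing (O k n X) :=
  inferInstanceAs (CommRing (MvPolynomial (Fin (n + 1)) k ⧸ MvPolynomial.vanishingIdeal k X))

theorem vanishingIdeal_anti {X Y : Set (Fin (n + 1) → k)} (h : X ⊆ Y) :
    MvPolynomial.vanishingIdeal k Y ≤ MvPolynomial.vanishingIdeal k X := fun p hp => by
  rw [MvPolynomial.mem_vanishingIdeal_iff] at hp ⊢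
  exact fun x hx => hp x (h hx)

/-- The (surjective) restriction homomorphism `O(Y) → O(X)` for `X ⊆ Y`. -/
def res {X Y : Set (Fin (n + 1) → k)} (h : X ⊆ Y) : O k n Y →+* O k n X :=
  Ideal.Quotient.factor (vanishingIdeal_anti k n h)

open Classical in
/-- The ring endomorphism of `O(X)` induced by a permutation `σ` of the coordinates
(when `X` is `σ`-stable; the definition branches on this (true, in our uses)
stability condition to be total). -/
def permO (σ : Equiv.Perm (Fin (n + 1))) (X : Set (Fin (n + 1) → k)) :
    O k n X →+* O k n X :=
  if h : ∀ x ∈ X, x ∘ σ ∈ X then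
    Ideal.Quotient.lift _
      ((Ideal.Quotient.mk _).comp (MvPolynomial.rename (R := k) ⇑σ).toRingHom)
      (fun p hp => by
        have hmem : (MvPolynomial.rename (R := k) ⇑σ) p ∈
            MvPolynomial.vanishingIdeal k X := by
          rw [MvPolynomial.mem_vanishingIdeal_iff]
          intro x hx
          rw [MvPolynomial.aeval_rename]
          exact (MvPolynomial.mem_vanishingIdeal_iff.1 hp) _ (h x hx)
        exact Ideal.Quotient.eq_zero_iff_mem.2 hmem)
  else RingHom.id _

/-- The fixed subalgebra `O(V_i)^{s_i}` of `O(V_i)` under the automorphism induced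
by the simple transposition `s_i`. -/
def fixedO (i : ℕ) : Subring (O k n (Vi k n i)) :=
  RingHom.eqLocus (permO k n (simple n i) (Vi k n i)) (RingHom.id _)

open Fin.NatCast in
/-- The image `f_i` of `X_i − X_{i+1}` in the coordinate ring `O(X)`. -/
def fbar (X : Set (Fin (n + 1) → k)) (i : ℕ) : O k n X :=
  Ideal.Quotient.mk _
    (MvPolynomial.X (i : Fin (n + 1)) - MvPolynomial.X ((i + 1 : ℕ) : Fin (n + 1)))

theorem Vt_subset_ZZ (t : Equiv.Perm (Fin (n + 1))) : Vt k n t ⊆ ZZ k n := by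
  refine Set.iUnion₂_subset fun L hL => ?_
  exact Set.subset_iUnion₂ (s := fun L _ => L) L hL.1

theorem Vi_subset_ZZ (i : ℕ) : Vi k n i ⊆ ZZ k n := Vt_subset_ZZ k n _

theorem seqSet_subset_ZZ : ∀ l : List ℕ, seqSet k n l ⊆ ZZ k n
  | [] => subset_rfl
  | [_] => Vi_subset_ZZ k n _
  | _ :: _ :: _ => Set.inter_subset_left.trans (Vi_subset_ZZ k n _)

end

open Fin.NatCast

/-!
Away from `0`, the points of `Z` are the sum-zero vectors taking exactly two values. Hence every
`W ∈ 𝒱_n` is described by a cup diagram, a graph on the points `0, …, n` in which every vertex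
has at most one neighbour: a nonzero point of `Z` lies in `W` iff it takes different values at
the two ends of every cup. If no cup joins `{i, i+1}` to another point, `W ∩ V_i` is
`s_i`-invariant. Otherwise, say `i` is joined to `b ∉ {i, i+1}`; then `x_b = x_{i+1}` on
`W ∩ V_i`, so `f_i` agrees there with the `s_i`-invariant form `E = X_i + X_{i+1} - 2 X_b`.
Writing `p - s_i p = f_i g`, the polynomial `(p + s_i p + E g) / 2` is `s_i`-invariant and agrees
with `p` on `W ∩ V_i`.
-/

def AtMostTwoValued {α β : Type*} (x : α → β) : Prop :=
  ∀ a b c, x a = x b ∨ x a = x c ∨ x b = x c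

section CupDiagrams

variable {α β : Type*}

def IsProperColoring (G : SimpleGraph α) (x : α → β) : Prop :=
  ∀ ⦃a b⦄, G.Adj a b → x a ≠ x b

/-- The cup `u v` replaces the cups of `G` at `u` and `v`, and the former partners of `u` and `v`
are joined to each other: this is how `i · W` arises from `W`, with `u = i`, `v = i + 1`. -/
def addCup (u v : α) (G : SimpleGraph α) : SimpleGraph α :=
  SimpleGraph.fromRel fun a b => a = u ∧ b = v ∨
    a ≠ u ∧ a ≠ v ∧ b ≠ u ∧ b ≠ v ∧ (G.Adj a b ∨ G.Adj a u ∧ G.Adj b v)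

variable {G : SimpleGraph α} {u v : α}

theorem addCup_adj_self (huv : u ≠ v) : (addCup u v G).Adj u v :=
  (SimpleGraph.fromRel_adj _ _ _).mpr ⟨huv, Or.inl (Or.inl ⟨rfl, rfl⟩)⟩

theorem neighborSet_addCup_subsingleton (hG : ∀ a, (G.neighborSet a).Subsingleton) (a : α) :
    ((addCup u v G).neighborSet a).Subsingleton := by
  intro b hb c hc
  simp only [SimpleGraph.mem_neighborSet, addCup, SimpleGraph.fromRel_adj] at hb hc
  have hG' : ∀ a b c, G.Adj a b → G.Adj a c → b = c := fun a _ _ hb hc => hG a hb hc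
  have hsymm : ∀ a b, G.Adj a b → G.Adj b a := fun _ _ h => h.symm
  grind

theorem exists_adj_of_not_isProperColoring (huv : u ≠ v) {x y : α → β}
    (hx : IsProperColoring (addCup u v G) x) (hy : ∀ a, a ≠ u → a ≠ v → y a = x a)
    (hyuv : y u ≠ y v) (hyG : ¬IsProperColoring G y) :
    ∃ a b, G.Adj a b ∧ (a = u ∨ a = v) ∧ b ≠ u ∧ b ≠ v ∧ y a = y b := by
  simp only [IsProperColoring, not_forall, not_not] at hyG
  obtain ⟨a, b, hab, hyab⟩ := hyG
  by_cases ha : a = u ∨ a = v <;> by_cases hb : b = u ∨ b = v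
  · exfalso
    rcases ha with rfl | rfl <;> rcases hb with rfl | rfl
    exacts [hab.ne rfl, hyuv hyab, hyuv hyab.symm, hab.ne rfl]
  · simp only [not_or] at hb
    exact ⟨a, b, hab, ha, hb.1, hb.2, hyab⟩
  · simp only [not_or] at ha
    exact ⟨b, a, hab.symm, hb, ha.1, ha.2, hyab.symm⟩
  · simp only [not_or] at ha hb
    refine absurd ?_ (hx ((SimpleGraph.fromRel_adj _ _ _).mpr
      ⟨hab.ne, Or.inl (Or.inr ⟨ha.1, ha.2, hb.1, hb.2, Or.inl hab⟩)⟩))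
    rwa [← hy a ha.1 ha.2, ← hy b hb.1 hb.2]

theorem addCup_adj_of_adj_of_adj (hG : ∀ a, (G.neighborSet a).Subsingleton) (huv : u ≠ v)
    {a b : α} (hau : a ≠ u) (hav : a ≠ v) (hbu : b ≠ u) (hbv : b ≠ v) (ha : G.Adj a u)
    (hb : G.Adj b v) : (addCup u v G).Adj a b :=
  (SimpleGraph.fromRel_adj _ _ _).mpr ⟨fun hab => huv (hG a ha (hab ▸ hb)),
    Or.inl (Or.inr ⟨hau, hav, hbu, hbv, Or.inr ⟨ha, hb⟩⟩)⟩

/-- `y` stands for `x` or for `x ∘ Equiv.swap u v`. -/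
theorem isProperColoring_addCup_of_isProperColoring {x y : α → β}
    (hyG : IsProperColoring G y) (hy : ∀ a, a ≠ u → a ≠ v → y a = x a) (hyuv : y u ≠ y v)
    (hxy : ∀ c, x c = y u ∨ x c = y v) (hxuv : x u ≠ x v) :
    IsProperColoring (addCup u v G) x := by
  suffices key : ∀ a b, a = u ∧ b = v ∨ a ≠ u ∧ a ≠ v ∧ b ≠ u ∧ b ≠ v ∧
      (G.Adj a b ∨ G.Adj a u ∧ G.Adj b v) → x a ≠ x b by
    intro a b hab
    obtain ⟨-, hr | hr⟩ := (SimpleGraph.fromRel_adj _ _ _).mp hab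
    exacts [key a b hr, (key b a hr).symm]
  rintro a b (⟨rfl, rfl⟩ | ⟨hau, hav, hbu, hbv, hab | ⟨hau', hbv'⟩⟩)
  · exact hxuv
  · rw [← hy a hau hav, ← hy b hbu hbv]
    exact hyG hab
  · have ha : x a = y v := (hxy a).resolve_left (by rw [← hy a hau hav]; exact hyG hau')
    have hb : x b = y u := (hxy b).resolve_right (by rw [← hy b hbu hbv]; exact hyG hbv')
    rw [ha, hb]
    exact hyuv.symm

variable [DecidableEq α]

theorem isProperColoring_or_comp_swap_of_addCup (hG : ∀ a, (G.neighborSet a).Subsingleton)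
    (huv : u ≠ v) {x : α → β} (h : IsProperColoring (addCup u v G) x) :
    IsProperColoring G x ∨ IsProperColoring G (x ∘ Equiv.swap u v) := by
  have hxuv : x u ≠ x v := h (addCup_adj_self huv)
  by_contra! hn
  obtain ⟨a, b, hab, ha, hbu, hbv, hxab⟩ :=
    exists_adj_of_not_isProperColoring huv h (fun _ _ _ => rfl) hxuv hn.1
  obtain ⟨c, d, hcd, hc, hdu, hdv, hxcd⟩ := exists_adj_of_not_isProperColoring huv h
    (y := x ∘ Equiv.swap u v) (fun a hau hav => by simp [Equiv.swap_apply_of_ne_of_ne hau hav])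
    (by simpa using hxuv.symm) hn.2
  simp only [Function.comp_apply, Equiv.swap_apply_of_ne_of_ne hdu hdv] at hxcd
  rcases ha with rfl | rfl <;> rcases hc with rfl | rfl
  · obtain rfl := hG _ hab hcd
    simp only [Equiv.swap_apply_left] at hxcd
    exact hxuv (hxab.trans hxcd.symm)
  · simp only [Equiv.swap_apply_right] at hxcd
    exact h (addCup_adj_of_adj_of_adj hG huv hbu hbv hdu hdv hab.symm hcd.symm)
      (hxab.symm.trans hxcd)
  · simp only [Equiv.swap_apply_left] at hxcd
    exact h (addCup_adj_of_adj_of_adj hG huv hdu hdv hbu hbv hcd.symm hab.symm)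
      (hxcd.symm.trans hxab)
  · obtain rfl := hG _ hab hcd
    simp only [Equiv.swap_apply_right] at hxcd
    exact hxuv (hxcd.trans hxab.symm)

theorem isProperColoring_addCup_iff (hG : ∀ a, (G.neighborSet a).Subsingleton) (huv : u ≠ v)
    {x : α → β} (hx : AtMostTwoValued x) :
    IsProperColoring (addCup u v G) x ↔
      x u ≠ x v ∧ (IsProperColoring G x ∨ IsProperColoring G (x ∘ Equiv.swap u v)) := by
  refine ⟨fun h => ⟨h (addCup_adj_self huv), isProperColoring_or_comp_swap_of_addCup hG huv h⟩,
    fun ⟨hxuv, hG'⟩ => ?_⟩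
  have hval : ∀ c, x c = x u ∨ x c = x v := fun c => (hx c u v).imp_right (·.resolve_right hxuv)
  rcases hG' with hG' | hG'
  · exact isProperColoring_addCup_of_isProperColoring hG' (fun _ _ _ => rfl) hxuv hval hxuv
  · refine isProperColoring_addCup_of_isProperColoring hG'
      (fun a hau hav => by simp [Equiv.swap_apply_of_ne_of_ne hau hav])
      (by simpa using hxuv.symm) (fun c => by simpa [or_comm] using hval c) hxuv

theorem AtMostTwoValued.apply_eq_apply_swap {x : α → β} (hx : AtMostTwoValued x)
    (huv : x u ≠ x v) {a b : α} (ha : a = u ∨ a = v) (hab : x a ≠ x b) :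
    x b = x (Equiv.swap u v a) := by
  rcases ha with rfl | rfl
  · rw [Equiv.swap_apply_left]
    exact ((hx b a v).resolve_left hab.symm).resolve_right huv
  · rw [Equiv.swap_apply_right]
    exact ((hx b a u).resolve_left hab.symm).resolve_right huv.symm

theorem isProperColoring_comp_swap_iff
    (hG : ∀ a b, G.Adj a b → (a = u ∨ a = v) → b = u ∨ b = v) {x : α → β} :
    IsProperColoring G (x ∘ Equiv.swap u v) ↔ IsProperColoring G x := by
  have hs : ∀ a b, G.Adj a b → G.Adj (Equiv.swap u v a) (Equiv.swap u v b) := by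
    intro a b hab
    have hsymm : ∀ a b, G.Adj a b → G.Adj b a := fun _ _ h => h.symm
    have := hab.ne
    grind
  refine ⟨fun hx a b hab => ?_, fun hx a b hab => hx (hs a b hab)⟩
  simpa using hx (hs a b hab)

end CupDiagrams

section Polynomial

open MvPolynomial

variable {R ι : Type*} [CommRing R] [DecidableEq ι]

theorem rename_swap_rename_swap (u v : ι) (p : MvPolynomial ι R) :
    rename (Equiv.swap u v) (rename (Equiv.swap u v) p) = p := by
  rw [rename_rename, ← Equiv.coe_trans, Equiv.swap_swap, Equiv.coe_refl, rename_id,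
    AlgHom.id_apply]

theorem X_sub_X_dvd_sub_rename_swap (u v : ι) (p : MvPolynomial ι R) :
    X u - X v ∣ p - rename (Equiv.swap u v) p := by
  rw [← Ideal.mem_span_singleton, ← Ideal.Quotient.eq]
  set I : Ideal (MvPolynomial ι R) := Ideal.span {X u - X v}
  have hXuv : Ideal.Quotient.mk I (X v) = Ideal.Quotient.mk I (X u) := by
    rw [Ideal.Quotient.eq, ← neg_sub]
    exact neg_mem (Ideal.mem_span_singleton_self _)
  have key : (Ideal.Quotient.mkₐ R I).comp (rename (Equiv.swap u v)) =
      Ideal.Quotient.mkₐ R I := by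
    ext a
    simp only [AlgHom.comp_apply, rename_X, Ideal.Quotient.mkₐ_eq_mk]
    rcases eq_or_ne a u with rfl | hau
    · rw [Equiv.swap_apply_left, hXuv]
    rcases eq_or_ne a v with rfl | hav
    · rw [Equiv.swap_apply_right, hXuv]
    · rw [Equiv.swap_apply_of_ne_of_ne hau hav]
  exact (DFunLike.congr_fun key p).symm

variable [IsDomain R] [Invertible (2 : R)]

theorem exists_rename_swap_eq_sub_mem {u v : ι} (huv : u ≠ v)
    {I : Ideal (MvPolynomial ι R)} {E : MvPolynomial ι R}
    (hE : rename (Equiv.swap u v) E = E) (hEI : E - (X u - X v) ∈ I) (p : MvPolynomial ι R) :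
    ∃ q, rename (Equiv.swap u v) q = q ∧ q - p ∈ I := by
  obtain ⟨g, hg⟩ := X_sub_X_dvd_sub_rename_swap u v p
  set s := rename (R := R) (Equiv.swap u v)
  have hsf : s (X u - X v) = -(X u - X v) := by
    simp only [s, map_sub, rename_X, Equiv.swap_apply_left, Equiv.swap_apply_right, neg_sub]
  have hsg : s g = g := by
    have hf : (X u - X v : MvPolynomial ι R) ≠ 0 := sub_ne_zero.mpr (X_injective.ne huv)
    refine mul_left_cancel₀ hf ?_
    have := congrArg s hg
    rw [map_sub, rename_swap_rename_swap, map_mul, hsf] at this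
    linear_combination this + hg
  have h2 : (C ⅟2 : MvPolynomial ι R) * 2 = 1 := by
    rw [← map_ofNat C 2, ← C_mul, invOf_mul_self, C_1]
  -- modulo `I`, `E * g` is congruent to `(X u - X v) * g = p - s p`
  refine ⟨C ⅟2 * (p + s p + E * g), ?_, ?_⟩
  · simp only [map_mul, map_add, rename_C, rename_swap_rename_swap, hE, hsg, s]
    ring
  · rw [show C ⅟2 * (p + s p + E * g) - p = C ⅟2 * g * (E - (X u - X v)) by
      linear_combination -C ⅟2 * hg + p * h2]
    exact I.mul_mem_left _ hEI

end Polynomial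

section Lines

variable {k n}

theorem mem_Hyp_swap {u v : Fin (n + 1)} {x : Fin (n + 1) → k} :
    x ∈ Hyp k n (Equiv.swap u v) ↔ ∑ a, x a = 0 ∧ x u = x v := by
  refine and_congr_right fun _ => ⟨fun h => by simpa using (h u).symm, fun h a => ?_⟩
  rcases eq_or_ne a u with rfl | hau
  · simpa using h.symm
  rcases eq_or_ne a v with rfl | hav
  · simpa using h
  · rw [Equiv.swap_apply_of_ne_of_ne hau hav]

theorem smul_mem_Hyp {t : Equiv.Perm (Fin (n + 1))} {x : Fin (n + 1) → k} (c : k)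
    (hx : x ∈ Hyp k n t) : c • x ∈ Hyp k n t :=
  ⟨by simp [← Finset.mul_sum, hx.1], fun a => by simp [hx.2 a]⟩

theorem IsWeylLine.sum_eq_zero {L : Set (Fin (n + 1) → k)} (hL : IsWeylLine k n L)
    {x : Fin (n + 1) → k} (hx : x ∈ L) : ∑ a, x a = 0 := by
  obtain ⟨-, T, -, rfl⟩ := hL
  exact hx.1

theorem IsWeylLine.exists_eq_smul {L : Set (Fin (n + 1) → k)} (hL : IsWeylLine k n L)
    {x y : Fin (n + 1) → k} (hx : x ∈ L) (hx0 : x ≠ 0) (hy : y ∈ L) : ∃ c : k, y = c • x := by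
  obtain ⟨⟨w, -, rfl⟩, -⟩ := hL
  obtain ⟨a, rfl⟩ := hx
  obtain ⟨b, rfl⟩ := hy
  have ha : a ≠ 0 := by rintro rfl; simp at hx0
  exact ⟨b / a, by simp [smul_smul, div_mul_cancel₀ _ ha]⟩

theorem IsWeylLine.mem_of_forall_eq {L : Set (Fin (n + 1) → k)} (hL : IsWeylLine k n L)
    {x y : Fin (n + 1) → k} (hx : x ∈ L) (hy : ∑ a, y a = 0)
    (hxy : ∀ a b, x a = x b → y a = y b) : y ∈ L := by
  obtain ⟨-, T, hT, rfl⟩ := hL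
  refine ⟨hy, Set.mem_iInter₂.mpr fun t ht => ?_⟩
  obtain ⟨a, b, -, rfl⟩ := hT t ht
  exact mem_Hyp_swap.mpr ⟨hy, hxy a b (mem_Hyp_swap.mp (Set.mem_iInter₂.mp hx.2 _ ht)).2⟩

/-- For a suitable constant `m`, the vector `a ↦ x a ^ 2 - m` lies on the line of `x`, so all
values of `x` are roots of one quadratic polynomial. -/
theorem IsWeylLine.atMostTwoValued {L : Set (Fin (n + 1) → k)} (hL : IsWeylLine k n L)
    {x : Fin (n + 1) → k} (hx : x ∈ L) : AtMostTwoValued x := by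
  rcases eq_or_ne x 0 with rfl | hx0
  · exact fun _ _ _ => Or.inl rfl
  set m : k := (∑ a, x a ^ 2) / (n + 1)
  have hm : ∑ a, (x a ^ 2 - m) = 0 := by
    rw [Finset.sum_sub_distrib, Finset.sum_const, Finset.card_univ, Fintype.card_fin,
      nsmul_eq_mul, Nat.cast_add_one, mul_div_cancel₀ _ (Nat.cast_add_one_ne_zero n), sub_self]
  obtain ⟨c, hc⟩ := hL.exists_eq_smul hx hx0
    (hL.mem_of_forall_eq hx hm fun a b h => by simp only [h])
  have hsum : ∀ a b, x a ≠ x b → x a + x b = c := fun a b h => by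
    refine mul_left_cancel₀ (sub_ne_zero.mpr h) ?_
    have hca := congrFun hc a
    have hcb := congrFun hc b
    simp only [Pi.smul_apply, smul_eq_mul] at hca hcb
    linear_combination hca - hcb
  intro a b d
  by_contra! h
  exact h.2.2 (add_left_cancel ((hsum a b h.1).trans (hsum a d h.2.1).symm))

theorem exists_eq_smul_of_forall_eq {x y : Fin (n + 1) → k} (hx0 : x ≠ 0)
    (hx : ∑ a, x a = 0) (h2 : AtMostTwoValued x) (hy : ∑ a, y a = 0)
    (hxy : ∀ a b, x a = x b → y a = y b) : ∃ c : k, y = c • x := by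
  classical
  obtain ⟨q, hq⟩ : ∃ q, x q ≠ 0 := by
    by_contra! h
    exact hx0 (funext h)
  obtain ⟨p, hp⟩ : ∃ p, x p ≠ x q := by
    by_contra! h
    rw [Finset.sum_congr rfl fun a _ => h a, Finset.sum_const, Finset.card_univ,
      Fintype.card_fin, nsmul_eq_mul] at hx
    exact hq ((mul_eq_zero.mp hx).resolve_left (Nat.cast_ne_zero.mpr n.succ_ne_zero))
  have hval : ∀ a, x a = x p ∨ x a = x q := fun a => (h2 a p q).imp_right (·.resolve_right hp)
  -- `z` vanishes on one level set of `x` and is constant on the other, so `∑ z = 0` forces `z = 0`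
  set z : Fin (n + 1) → k := fun a => x q * y a - y q * x a
  have hz : ∀ a, z a = if x a = x p then z p else 0 := fun a => by
    rcases hval a with h | h
    · simp only [z, h, hxy a p h, if_true]
    · simp only [z, h, hxy a q h, hp.symm, if_false]
      ring
  have hzp : z p = 0 := by
    have hsum : ∑ a, z a = 0 := by
      rw [Finset.sum_sub_distrib, ← Finset.mul_sum, ← Finset.mul_sum, hx, hy]
      ring
    rw [Finset.sum_congr rfl fun a _ => hz a, Finset.sum_ite, Finset.sum_const_zero, add_zero,
      Finset.sum_const, nsmul_eq_mul] at hsum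
    refine (mul_eq_zero.mp hsum).resolve_left (Nat.cast_ne_zero.mpr ?_)
    exact Finset.card_ne_zero_of_mem (Finset.mem_filter.mpr ⟨Finset.mem_univ p, rfl⟩)
  refine ⟨y q / x q, funext fun a => ?_⟩
  have hza := hz a
  rw [hzp, ite_self] at hza
  simp only [z, Pi.smul_apply, smul_eq_mul] at hza ⊢
  field_simp
  linear_combination hza

theorem isWeylLine_range_smul {x : Fin (n + 1) → k} (hx0 : x ≠ 0) (hx : ∑ a, x a = 0)
    (h2 : AtMostTwoValued x) : IsWeylLine k n (Set.range fun c : k => c • x) := by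
  refine ⟨⟨x, hx0, rfl⟩, {t | ∃ a b, a ≠ b ∧ x a = x b ∧ t = Equiv.swap a b}, ?_, ?_⟩
  · rintro t ⟨a, b, hab, -, rfl⟩
    exact ⟨a, b, hab, rfl⟩
  ext y
  constructor
  · rintro ⟨c, rfl⟩
    refine ⟨(smul_mem_Hyp c (t := 1) ⟨hx, fun _ => rfl⟩).1, Set.mem_iInter₂.mpr ?_⟩
    rintro _ ⟨a, b, -, hab, rfl⟩
    exact smul_mem_Hyp c (mem_Hyp_swap.mpr ⟨hx, hab⟩)
  · rintro ⟨hy, hyT⟩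
    obtain ⟨c, rfl⟩ := exists_eq_smul_of_forall_eq hx0 hx h2 hy fun a b hab => by
      rcases eq_or_ne a b with rfl | hne
      · rfl
      · exact (mem_Hyp_swap.mp (Set.mem_iInter₂.mp hyT _ ⟨a, b, hne, hab, rfl⟩)).2
    exact ⟨c, rfl⟩

theorem mem_ZZ_iff {x : Fin (n + 1) → k} (hx0 : x ≠ 0) :
    x ∈ ZZ k n ↔ ∑ a, x a = 0 ∧ AtMostTwoValued x := by
  simp only [ZZ, Set.mem_iUnion₂, Set.mem_ofPred_eq, exists_prop]
  constructor
  · rintro ⟨L, hL, hxL⟩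
    exact ⟨hL.sum_eq_zero hxL, hL.atMostTwoValued hxL⟩
  · rintro ⟨hx, h2⟩
    exact ⟨_, isWeylLine_range_smul hx0 hx h2, 1, one_smul k x⟩

theorem mem_Vt_iff {x : Fin (n + 1) → k} (hx0 : x ≠ 0) (t : Equiv.Perm (Fin (n + 1))) :
    x ∈ Vt k n t ↔ x ∈ ZZ k n ∧ x ∉ Hyp k n t := by
  simp only [Vt, ZZ, Set.mem_iUnion₂, Set.mem_ofPred_eq, exists_prop]
  constructor
  · rintro ⟨L, ⟨hL, hLH⟩, hxL⟩
    refine ⟨⟨L, hL, hxL⟩, fun hxH => hLH fun y hy => ?_⟩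
    obtain ⟨c, rfl⟩ := hL.exists_eq_smul hxL hx0 hy
    exact smul_mem_Hyp c hxH
  · rintro ⟨⟨L, hL, hxL⟩, hxH⟩
    exact ⟨L, ⟨hL, fun hLH => hxH (hLH hxL)⟩, hxL⟩

theorem mem_Vi_iff {x : Fin (n + 1) → k} (hx0 : x ≠ 0) (i : ℕ) :
    x ∈ Vi k n i ↔ x ∈ ZZ k n ∧ x i ≠ x (i + 1 : ℕ) := by
  rw [Vi, mem_Vt_iff hx0, simple, mem_Hyp_swap]
  refine and_congr_right fun hx => ?_
  simp only [((mem_ZZ_iff hx0).mp hx).1, true_and]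

theorem atMostTwoValued_of_mem_ZZ {x : Fin (n + 1) → k} (hx : x ∈ ZZ k n) :
    AtMostTwoValued x := by
  simp only [ZZ, Set.mem_iUnion₂, Set.mem_ofPred_eq, exists_prop] at hx
  obtain ⟨L, hL, hxL⟩ := hx
  exact hL.atMostTwoValued hxL

theorem comp_perm_ne_zero {x : Fin (n + 1) → k} (hx0 : x ≠ 0) (σ : Equiv.Perm (Fin (n + 1))) :
    x ∘ σ ≠ 0 :=
  fun h => hx0 (σ.surjective.injective_comp_right (show x ∘ σ = (0 : Fin (n + 1) → k) ∘ σ from h))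

theorem comp_mem_ZZ_iff (σ : Equiv.Perm (Fin (n + 1))) {x : Fin (n + 1) → k} :
    x ∘ σ ∈ ZZ k n ↔ x ∈ ZZ k n := by
  rcases eq_or_ne x 0 with rfl | hx0
  · exact Iff.rfl
  rw [mem_ZZ_iff hx0, mem_ZZ_iff (comp_perm_ne_zero hx0 σ), Function.comp_def, Equiv.sum_comp σ x]
  exact and_congr_right fun _ =>
    ⟨fun h a b c => by simpa using h (σ.symm a) (σ.symm b) (σ.symm c), fun h _ _ _ => h _ _ _⟩

theorem natCast_ne_natCast_succ {i : ℕ} (hi : i < n) :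
    (i : Fin (n + 1)) ≠ ((i + 1 : ℕ) : Fin (n + 1)) := by
  rw [Ne, Fin.ext_iff, Fin.val_natCast, Fin.val_natCast, Nat.mod_eq_of_lt (by omega),
    Nat.mod_eq_of_lt (by omega)]
  omega

theorem mem_permSet_simple {i : ℕ} {W : Set (Fin (n + 1) → k)} {x : Fin (n + 1) → k} :
    x ∈ permSet k n (simple n i) W ↔ x ∘ simple n i ∈ W := by
  constructor
  · rintro ⟨w, hw, rfl⟩
    simpa [Function.comp_def, simple] using hw
  · exact fun hx => ⟨_, hx, funext fun a => by simp [simple]⟩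

theorem comp_simple_mem_Vi {i : ℕ} {x : Fin (n + 1) → k} (hx : x ∈ Vi k n i) :
    x ∘ simple n i ∈ Vi k n i := by
  rcases eq_or_ne x 0 with rfl | hx0
  · exact hx
  rw [mem_Vi_iff hx0] at hx
  rw [mem_Vi_iff (comp_perm_ne_zero hx0 _), comp_mem_ZZ_iff]
  simpa [simple, ne_comm] using hx

end Lines

section Words

def cupDiagram (l : List ℕ) : SimpleGraph (Fin (n + 1)) :=
  l.foldr (fun (i : ℕ) G => addCup (i : Fin (n + 1)) ((i + 1 : ℕ) : Fin (n + 1)) G) ⊥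

variable {k n}

theorem neighborSet_cupDiagram_subsingleton (l : List ℕ) (a : Fin (n + 1)) :
    ((cupDiagram n l).neighborSet a).Subsingleton := by
  induction l generalizing a with
  | nil => exact fun b hb => absurd hb (by simp [cupDiagram])
  | cons i l ih => exact neighborSet_addCup_subsingleton ih a

theorem seqSet_cons (i : ℕ) (l : List ℕ) :
    seqSet k n (i :: l) = dotAct k n i (seqSet k n l) := by
  cases l with
  | nil => exact (Set.inter_eq_left.mpr ((Vi_subset_ZZ k n i).trans Set.subset_union_left)).symm
  | cons j l => rfl

theorem mem_seqSet_iff {l : List ℕ} (hl : ∀ i ∈ l, i < n) {x : Fin (n + 1) → k} (hx0 : x ≠ 0) :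
    x ∈ seqSet k n l ↔ x ∈ ZZ k n ∧ IsProperColoring (cupDiagram n l) x := by
  induction l generalizing x with
  | nil => simp [seqSet, cupDiagram, IsProperColoring]
  | cons i l ih =>
    have hl' : ∀ j ∈ l, j < n := fun j hj => hl j (List.mem_cons_of_mem i hj)
    rw [seqSet_cons, dotAct, Set.mem_inter_iff, Set.mem_union, mem_permSet_simple,
      mem_Vi_iff hx0, ih hl' hx0, ih hl' (comp_perm_ne_zero hx0 _), comp_mem_ZZ_iff]
    by_cases hx : x ∈ ZZ k n
    · simp only [hx, true_and]
      exact (isProperColoring_addCup_iff (neighborSet_cupDiagram_subsingleton l)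
        (natCast_ne_natCast_succ (hl i List.mem_cons_self)) (atMostTwoValued_of_mem_ZZ hx)).symm
    · simp [hx]

theorem mem_seqSet_inter_Vi_iff {l : List ℕ} (hl : ∀ i ∈ l, i < n) {i : ℕ}
    {x : Fin (n + 1) → k} (hx0 : x ≠ 0) :
    x ∈ seqSet k n l ∩ Vi k n i ↔
      (x ∈ ZZ k n ∧ IsProperColoring (cupDiagram n l) x) ∧ x i ≠ x (i + 1 : ℕ) := by
  rw [Set.mem_inter_iff, mem_seqSet_iff hl hx0, mem_Vi_iff hx0]
  tauto

theorem permSet_simple_seqSet_inter_Vi {l : List ℕ} (hl : ∀ i ∈ l, i < n) {i : ℕ}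
    (h : ∀ a b, (cupDiagram n l).Adj a b → (a = i ∨ a = (i + 1 : ℕ)) → b = i ∨ b = (i + 1 : ℕ)) :
    permSet k n (simple n i) (seqSet k n l ∩ Vi k n i) = seqSet k n l ∩ Vi k n i := by
  ext x
  rw [mem_permSet_simple]
  rcases eq_or_ne x 0 with rfl | hx0
  · exact Iff.rfl
  rw [mem_seqSet_inter_Vi_iff hl hx0, mem_seqSet_inter_Vi_iff hl (comp_perm_ne_zero hx0 _),
    comp_mem_ZZ_iff, simple, isProperColoring_comp_swap_iff h, Function.comp_apply,
    Function.comp_apply, Equiv.swap_apply_left, Equiv.swap_apply_right, ne_comm]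

end Words

section CoordinateRings

open MvPolynomial

variable {k n}

theorem permO_mk {σ : Equiv.Perm (Fin (n + 1))} {X : Set (Fin (n + 1) → k)}
    (hX : ∀ x ∈ X, x ∘ σ ∈ X) (p : MvPolynomial (Fin (n + 1)) k) :
    permO k n σ X (Ideal.Quotient.mk _ p) = Ideal.Quotient.mk _ (rename σ p) := by
  rw [permO]
  erw [dif_pos hX]
  rfl

theorem res_fixed_surjective_of_mk_eq_fbar {i : ℕ} (hi : i < n) {Y : Set (Fin (n + 1) → k)}
    (hY : Y ⊆ Vi k n i) {E : MvPolynomial (Fin (n + 1)) k} (hE : rename (simple n i) E = E)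
    (hEY : (Ideal.Quotient.mk _ E : O k n Y) = fbar k n Y i) :
    Function.Surjective ((res k n hY).comp (fixedO k n i).subtype) := by
  intro h
  obtain ⟨p, rfl⟩ := Ideal.Quotient.mk_surjective h
  obtain ⟨q, hq, hqp⟩ := exists_rename_swap_eq_sub_mem (natCast_ne_natCast_succ hi) hE
    (Ideal.Quotient.eq.mp hEY) p
  refine ⟨⟨Ideal.Quotient.mk _ q, ?_⟩, Ideal.Quotient.eq.mpr hqp⟩
  change permO k n (simple n i) (Vi k n i) _ = _
  rw [permO_mk (fun x => comp_simple_mem_Vi), simple, hq]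
  rfl

theorem res_fixed_surjective_of_forall_apply_eq {i : ℕ} (hi : i < n)
    {Y : Set (Fin (n + 1) → k)} (hY : Y ⊆ Vi k n i) {a b : Fin (n + 1)}
    (ha : a = i ∨ a = (i + 1 : ℕ)) (hbu : b ≠ i) (hbv : b ≠ (i + 1 : ℕ))
    (h : ∀ x ∈ Y, x b = x (simple n i a)) :
    Function.Surjective ((res k n hY).comp (fixedO k n i).subtype) := by
  have hsb : Equiv.swap (i : Fin (n + 1)) ((i + 1 : ℕ) : Fin (n + 1)) b = b :=
    Equiv.swap_apply_of_ne_of_ne hbu hbv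
  rcases ha with rfl | rfl
  · refine res_fixed_surjective_of_mk_eq_fbar hi hY
      (E := X (i : Fin (n + 1)) + X ((i + 1 : ℕ) : Fin (n + 1)) - 2 * X b) ?_
      (Ideal.Quotient.eq.mpr ?_)
    · simp only [map_sub, map_add, map_mul, map_ofNat, rename_X, hsb, simple,
        Equiv.swap_apply_left, Equiv.swap_apply_right]
      ring
    · refine (mem_vanishingIdeal_iff).mpr fun x hx => ?_
      have := h x hx
      simp only [simple, Equiv.swap_apply_left] at this
      simp only [map_sub, map_add, map_mul, map_ofNat, aeval_X]
      linear_combination -2 * this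
  · refine res_fixed_surjective_of_mk_eq_fbar hi hY
      (E := 2 * X b - X (i : Fin (n + 1)) - X ((i + 1 : ℕ) : Fin (n + 1))) ?_
      (Ideal.Quotient.eq.mpr ?_)
    · simp only [map_sub, map_mul, map_ofNat, rename_X, hsb, simple,
        Equiv.swap_apply_left, Equiv.swap_apply_right]
      ring
    · refine (mem_vanishingIdeal_iff).mpr fun x hx => ?_
      have := h x hx
      simp only [simple, Equiv.swap_apply_right] at this
      simp only [map_sub, map_mul, map_ofNat, aeval_X]
      linear_combination 2 * this

end CoordinateRings

theorem res_fixed_surjective_of_not_invariant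
    (W : Set (Fin (n + 1) → k)) (hW : memVn k n W) (i : ℕ) (hi : i < n)
    (hni : permSet k n (simple n i) (W ∩ Vi k n i) ≠ W ∩ Vi k n i) :
    Function.Surjective
      ((res k n (Set.inter_subset_right : W ∩ Vi k n i ⊆ Vi k n i)).comp
        (fixedO k n i).subtype) := by
  obtain ⟨l, -, hl, rfl⟩ := hW
  by_cases hmix : ∃ a b, (cupDiagram n l).Adj a b ∧ (a = i ∨ a = (i + 1 : ℕ)) ∧
      b ≠ i ∧ b ≠ (i + 1 : ℕ)
  · obtain ⟨a, b, hab, ha, hbu, hbv⟩ := hmix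
    refine res_fixed_surjective_of_forall_apply_eq hi _ ha hbu hbv fun x hx => ?_
    rcases eq_or_ne x 0 with rfl | hx0
    · rfl
    obtain ⟨⟨hxZ, hxG⟩, hxuv⟩ := (mem_seqSet_inter_Vi_iff hl hx0).mp hx
    exact (atMostTwoValued_of_mem_ZZ hxZ).apply_eq_apply_swap hxuv ha (hxG hab)
  · refine absurd (permSet_simple_seqSet_inter_Vi hl fun a b hab ha => ?_) hni
    by_contra! hb
    exact hmix ⟨a, b, hab, ha, hb⟩

end TLpaper
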